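/- Let x₀ := −d/b = |δ_SP0|/(δ_RT0 + |δ_SP0|), and note x₀ ∈ (0, 1/2). For every η > 0 there exists B > 0 such that for all β ≥ B: (i) the equation b·x + d = T_β(x) has at least two distinct solutions in (0, 1/2); (ii) every solution x ∈ (0, 1/2) of this equation satisfies x < x₀, and moreover either x < η or |x − x₀| < η; (iii) there is a solution in (0, η) and a solution in (x₀ − η, x₀). -/

import Mathlib

/-!
Since `b x + d = b (x - x₀)`, the equation says that the gap `b (x - x₀) - β⁻¹ logit x` vanishes.
On `(0, 1/2)` the logit is negative, so the gap exceeds `b (x - x₀)`: every solution lies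
below `x₀`, and the gap is positive at `x₀`. Since `logit → -∞` at `0`, the gap is also
positive near `0`, for every `β`. On `[η, x₀ - η]` the line is at most `-b η` while
`β⁻¹ logit x ≥ β⁻¹ logit η → 0`, so for large `β` the gap is negative there. The intermediate
value theorem then gives a zero in `(0, η)` and one in `(x₀ - η, x₀)`, and there is none
in between.
-/

set_option autoImplicit false

open Real Set Filter Topology

noncomputable def logit (x : ℝ) : ℝ := log (x / (1 - x))

lemma logit_neg {x : ℝ} (hx0 : 0 < x) (hx : x < 1 / 2) : logit x < 0 :=
  log_neg (div_pos hx0 (by linarith)) ((div_lt_one (by linarith)).2 (by linarith))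

lemma logit_strictMonoOn : StrictMonoOn logit (Ioo 0 1) := by
  intro x hx y hy hxy
  apply log_lt_log (div_pos hx.1 (sub_pos.2 hx.2))
  rw [div_lt_div_iff₀ (sub_pos.2 hx.2) (sub_pos.2 hy.2)]
  nlinarith

lemma continuousOn_logit : ContinuousOn logit (Ioo 0 1) :=
  (continuousOn_id.div (continuousOn_const.sub continuousOn_id)
    fun _ hx => (sub_pos.2 hx.2).ne').log fun _ hx => (div_pos hx.1 (sub_pos.2 hx.2)).ne'

lemma tendsto_logit_nhdsGT_zero : Tendsto logit (𝓝[>] 0) atBot := by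
  refine tendsto_log_nhdsGT_zero.comp (tendsto_nhdsWithin_of_tendsto_nhds_of_eventually_within _
    ?_ ?_)
  · have h : Tendsto (fun x : ℝ => x / (1 - x)) (𝓝 0) (𝓝 (0 / (1 - 0))) :=
      (continuousAt_id.div (continuousAt_const.sub continuousAt_id) (by norm_num)).tendsto
    simpa using h.mono_left nhdsWithin_le_nhds
  · filter_upwards [Ioo_mem_nhdsGT one_pos] with x hx using div_pos hx.1 (sub_pos.2 hx.2)

noncomputable def logitGap (b x₀ β x : ℝ) : ℝ := b * (x - x₀) - β⁻¹ * logit x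

section logitGap

variable {b x₀ β : ℝ}

lemma continuousOn_logitGap : ContinuousOn (logitGap b x₀ β) (Ioo 0 1) :=
  (continuous_const.mul (continuous_id.sub continuous_const)).continuousOn.sub
    (continuousOn_const.mul continuousOn_logit)

lemma sub_lt_logitGap (hβ : 0 < β) {x : ℝ} (hx0 : 0 < x) (hx : x < 1 / 2) :
    b * (x - x₀) < logitGap b x₀ β x := by
  have := mul_neg_of_pos_of_neg (inv_pos.2 hβ) (logit_neg hx0 hx)
  unfold logitGap
  linarith

lemma lt_of_logitGap_eq_zero (hb : 0 < b) (hβ : 0 < β) {x : ℝ} (hx : x ∈ Ioo 0 (1 / 2))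
    (h : logitGap b x₀ β x = 0) : x < x₀ := by
  have := sub_lt_logitGap (b := b) (x₀ := x₀) hβ hx.1 hx.2
  rw [h] at this
  nlinarith

lemma logitGap_pos_of_logit_lt (hb : 0 < b) (hβ : 0 < β) {x : ℝ} (hx : 0 < x)
    (h : logit x < -(β * b * x₀)) : 0 < logitGap b x₀ β x := by
  have : β⁻¹ * logit x < -(b * x₀) := by
    rw [inv_mul_lt_iff₀ hβ]
    linarith
  unfold logitGap
  nlinarith

lemma logitGap_neg (hb : 0 < b) (hβ : 0 < β) (hx₀ : x₀ ≤ 1) {η x : ℝ} (hη : 0 < η)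
    (hηx : η ≤ x) (hx : x ≤ x₀ - η) (hlarge : -logit η < β * b * η) :
    logitGap b x₀ β x < 0 := by
  have hmono : logit η ≤ logit x :=
    logit_strictMonoOn.monotoneOn ⟨hη, by linarith⟩ ⟨hη.trans_le hηx, by linarith⟩ hηx
  have hlog : -(b * η) < β⁻¹ * logit x := by
    have : -(b * η) < β⁻¹ * logit η := by
      rw [lt_inv_mul_iff₀ hβ]
      linarith
    linarith [mul_le_mul_of_nonneg_left hmono (inv_pos.2 hβ).le]
  have hline : b * (x - x₀) ≤ -(b * η) := by nlinarith
  unfold logitGap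
  linarith

lemma lt_or_lt_of_logitGap_eq_zero (hb : 0 < b) (hβ : 0 < β) (hx₀ : x₀ ≤ 1) {η x : ℝ}
    (hη : 0 < η) (hlarge : -logit η < β * b * η) (h : logitGap b x₀ β x = 0) :
    x < η ∨ x₀ - η < x := by
  by_contra! hx
  exact (logitGap_neg hb hβ hx₀ hη hx.1 hx.2 hlarge).ne h

lemma exists_logitGap_eq_zero_mem_Ioo_zero (hb : 0 < b) (hβ : 0 < β) (hx₀ : x₀ ≤ 1)
    {η : ℝ} (hη : 0 < η) (hηx₀ : η ≤ x₀ - η) (hlarge : -logit η < β * b * η) :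
    ∃ x ∈ Ioo 0 η, logitGap b x₀ β x = 0 := by
  obtain ⟨a, ha_lt, ha⟩ := ((tendsto_logit_nhdsGT_zero.eventually
    (eventually_lt_atBot (-(β * b * x₀)))).and (Ioo_mem_nhdsGT hη)).exists
  have hcont : ContinuousOn (logitGap b x₀ β) (Icc a η) :=
    continuousOn_logitGap.mono (Icc_subset_Ioo ha.1 (by linarith))
  obtain ⟨x, hx, hx0⟩ := intermediate_value_Ioo' ha.2.le hcont
    ⟨logitGap_neg hb hβ hx₀ hη le_rfl hηx₀ hlarge, logitGap_pos_of_logit_lt hb hβ ha.1 ha_lt⟩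
  exact ⟨x, ⟨ha.1.trans hx.1, hx.2⟩, hx0⟩

lemma exists_logitGap_eq_zero_mem_Ioo_sub (hb : 0 < b) (hβ : 0 < β) (hx₀ : x₀ < 1 / 2)
    {η : ℝ} (hη : 0 < η) (hηx₀ : η ≤ x₀ - η) (hlarge : -logit η < β * b * η) :
    ∃ x ∈ Ioo (x₀ - η) x₀, logitGap b x₀ β x = 0 := by
  have hcont : ContinuousOn (logitGap b x₀ β) (Icc (x₀ - η) x₀) :=
    continuousOn_logitGap.mono (Icc_subset_Ioo (by linarith) (by linarith))
  have hpos : 0 < logitGap b x₀ β x₀ := by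
    simpa using sub_lt_logitGap (b := b) (x₀ := x₀) hβ (by linarith) hx₀
  exact intermediate_value_Ioo (by linarith) hcont
    ⟨logitGap_neg hb hβ (by linarith) hη hηx₀ le_rfl hlarge, hpos⟩

end logitGap

/-- With x₀ := −d/b ∈ (0, 1/2): for every η > 0 there exists
B > 0 such that for all β ≥ B,
(i) b·x + d = T_β(x) has at least two distinct solutions in (0, 1/2);
(ii) every solution x ∈ (0,1/2) satisfies x < x₀ and (x < η or |x − x₀| < η);
(iii) there is a solution in (0, η) and a solution in (x₀ − η, x₀). -/
theorem toc_small_solutions_large_beta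
    (δRT0 δSP0 : ℝ) (hSP0 : δSP0 < 0) (hRT0 : -δSP0 < δRT0)
    (b d x₀ : ℝ) (hb : b = δRT0 - δSP0) (hd : d = δSP0) (hx₀ : x₀ = -d / b)
    (T : ℝ → ℝ → ℝ) (hT : ∀ β x, T β x = β⁻¹ * Real.log (x / (1 - x))) :
    x₀ = |δSP0| / (δRT0 + |δSP0|) ∧ x₀ ∈ Ioo (0:ℝ) (1/2) ∧
    ∀ η : ℝ, 0 < η → ∃ B : ℝ, 0 < B ∧ ∀ β : ℝ, B ≤ β →
      ((∃ x ∈ Ioo (0:ℝ) (1/2), ∃ y ∈ Ioo (0:ℝ) (1/2), x ≠ y ∧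
          b * x + d = T β x ∧ b * y + d = T β y) ∧
       (∀ x ∈ Ioo (0:ℝ) (1/2), b * x + d = T β x →
          x < x₀ ∧ (x < η ∨ |x - x₀| < η)) ∧
       (∃ x ∈ Ioo (0:ℝ) η, b * x + d = T β x) ∧
       (∃ x ∈ Ioo (x₀ - η) x₀, b * x + d = T β x)) := by
  have hb0 : 0 < b := by rw [hb]; linarith
  have hbx₀ : b * x₀ = -d := by rw [hx₀]; field_simp
  have hx₀mem : x₀ ∈ Ioo (0:ℝ) (1/2) :=
    ⟨by rw [hx₀, hd]; exact div_pos (by linarith) hb0,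
     by rw [hx₀, div_lt_iff₀ hb0, hb, hd]; linarith⟩
  refine ⟨by rw [hx₀, hb, hd, abs_of_neg hSP0]; ring, hx₀mem, fun η hη => ?_⟩
  have hsol : ∀ β x, b * x + d = T β x ↔ logitGap b x₀ β x = 0 := fun β x => by
    rw [hT, logitGap, logit, sub_eq_zero, mul_sub, hbx₀, sub_neg_eq_add]
  set η' := min η (x₀ / 2)
  have hη'η : η' ≤ η := min_le_left _ _
  have hη'0 : 0 < η' := lt_min hη (half_pos hx₀mem.1)
  have hη'x₀ : η' ≤ x₀ - η' := by linarith [min_le_right η (x₀ / 2)]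
  refine ⟨(|logit η'| + 1) / (b * η'), by positivity, fun β hβ => ?_⟩
  have hβ0 : 0 < β := lt_of_lt_of_le (by positivity) hβ
  have hlarge : -logit η' < β * b * η' := by
    rw [div_le_iff₀ (by positivity)] at hβ
    linarith [neg_le_abs (logit η'), mul_assoc β b η']
  have hx₀1 : x₀ ≤ 1 := by linarith [hx₀mem.2]
  obtain ⟨s₁, hs₁, h₁⟩ := exists_logitGap_eq_zero_mem_Ioo_zero hb0 hβ0 hx₀1 hη'0 hη'x₀ hlarge
  obtain ⟨s₂, hs₂, h₂⟩ := exists_logitGap_eq_zero_mem_Ioo_sub hb0 hβ0 hx₀mem.2 hη'0 hη'x₀ hlarge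
  simp only [hsol]
  refine ⟨⟨s₁, ⟨hs₁.1, by linarith [hs₁.2]⟩, s₂, ⟨by linarith [hs₂.1], hs₂.2.trans hx₀mem.2⟩,
      (hs₁.2.trans_le hη'x₀ |>.trans hs₂.1).ne, h₁, h₂⟩,
    fun x hx h => ?_, ⟨s₁, ⟨hs₁.1, hs₁.2.trans_le hη'η⟩, h₁⟩, ⟨s₂, ⟨by linarith [hs₂.1], hs₂.2⟩, h₂⟩⟩
  have hxx₀ := lt_of_logitGap_eq_zero hb0 hβ0 hx h
  refine ⟨hxx₀, ?_⟩
  rcases lt_or_lt_of_logitGap_eq_zero hb0 hβ0 hx₀1 hη'0 hlarge h with hx' | hx'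
  · exact Or.inl (hx'.trans_le hη'η)
  · exact Or.inr (abs_sub_lt_iff.2 ⟨by linarith, by linarith⟩)
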